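/- For any 0 ≤ Q ≤ 1, the function f(x) = 1 + φ(√(Q + (1-Q)x)) - φ(√x) is convex in x on [0,1]. -/

import Mathlib

noncomputable def phi (x : ℝ) : ℝ :=
  1 - (1/2) * (1 + x) * Real.logb 2 (1 + x) - (1/2) * (1 - x) * Real.logb 2 (1 - x)

/-!
Write `g = φ ∘ √` and `ℓ x = Q + (1 - Q) x`, so that `f'' x = (1 - Q)² g''(ℓ x) - g'' x`.
Since `1 - ℓ x = (1 - Q)(1 - x)` and `ℓ x ≥ x`, this is nonnegative as soon as `(1 - x)² g''(x)`
is nondecreasing (for `Q = 1` one needs `g'' ≤ 0` instead). In the variable `s = √x` both facts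
reduce to the rational upper bound `artanh s ≤ s (3 - s²) / ((3 + s²)(1 - s²))` on `[0, 1)`,
which holds because the difference vanishes at `0` and has derivative `16 s⁴ / ((3 + s²)(1 - s²))²`.
-/

open Real Set

lemma Real.artanh_eq_half_log_sub_log {s : ℝ} (hs : s ∈ Ioo (-1) 1) :
    artanh s = (log (1 + s) - log (1 - s)) / 2 := by
  rw [artanh_eq_half_log (Ioo_subset_Icc_self hs),
    log_div (by linarith [hs.1]) (by linarith [hs.2])]
  ring

lemma Real.hasDerivAt_artanh {s : ℝ} (hs : s ∈ Ioo (-1) 1) :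
    HasDerivAt artanh (1 - s ^ 2)⁻¹ s := by
  have h₁ : 0 < 1 + s := by linarith [hs.1]
  have h₂ : 0 < 1 - s := by linarith [hs.2]
  have hlog := (((hasDerivAt_id s).const_add 1).log h₁.ne').sub
    (((hasDerivAt_id s).const_sub 1).log h₂.ne')
  refine ((hlog.div_const 2).congr_of_eventuallyEq ?_).congr_deriv ?_
  · filter_upwards [Ioo_mem_nhds hs.1 hs.2] with t ht using artanh_eq_half_log_sub_log ht
  · have : 1 - s ^ 2 ≠ 0 := by nlinarith
    simp only [id]
    field_simp
    ring

lemma monotoneOn_Ioo_of_hasDerivAt_nonneg {f f' : ℝ → ℝ} {a b : ℝ}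
    (hf : ∀ x ∈ Ioo a b, HasDerivAt f (f' x) x) (hf' : ∀ x ∈ Ioo a b, 0 ≤ f' x) :
    MonotoneOn f (Ioo a b) :=
  monotoneOn_of_hasDerivWithinAt_nonneg (convex_Ioo a b)
    (fun x hx => (hf x hx).continuousAt.continuousWithinAt)
    (by simpa only [interior_Ioo] using fun x hx => (hf x hx).hasDerivWithinAt)
    (by simpa only [interior_Ioo] using hf')

lemma artanh_le_div {s : ℝ} (hs : s ∈ Ico 0 1) :
    artanh s ≤ s * (3 - s ^ 2) / ((3 + s ^ 2) * (1 - s ^ 2)) := by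
  let W : ℝ → ℝ := fun t => t * (3 - t ^ 2) / ((3 + t ^ 2) * (1 - t ^ 2)) - artanh t
  have hW : ∀ t ∈ Ioo (-1 : ℝ) 1,
      HasDerivAt W (16 * t ^ 4 / ((3 + t ^ 2) ^ 2 * (1 - t ^ 2) ^ 2)) t := by
    intro t ht
    have h₁ : 1 - t ^ 2 ≠ 0 := by nlinarith [ht.1, ht.2]
    have h₂ : (3 + t ^ 2) * (1 - t ^ 2) ≠ 0 := mul_ne_zero (by positivity) h₁
    have hrat : HasDerivAt (fun t : ℝ => t * (3 - t ^ 2) / ((3 + t ^ 2) * (1 - t ^ 2)))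
        (((3 - 3 * t ^ 2) * ((3 + t ^ 2) * (1 - t ^ 2)) - t * (3 - t ^ 2) * (-4 * t - 4 * t ^ 3))
          / ((3 + t ^ 2) * (1 - t ^ 2)) ^ 2) t := by
      refine HasDerivAt.div ?_ ?_ h₂
      · exact ((hasDerivAt_id t).mul ((hasDerivAt_pow 2 t).const_sub 3)).congr_deriv (by
          simp only [id]; ring)
      · exact (((hasDerivAt_pow 2 t).const_add 3).mul
          ((hasDerivAt_pow 2 t).const_sub 1)).congr_deriv (by ring)
    refine (hrat.sub (hasDerivAt_artanh ht)).congr_deriv ?_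
    field_simp
    ring
  have hmono : MonotoneOn W (Ioo (-1) 1) :=
    monotoneOn_Ioo_of_hasDerivAt_nonneg hW fun t _ => by positivity
  have h := hmono ⟨by norm_num, by norm_num⟩ ⟨by linarith [hs.1], hs.2⟩ hs.1
  simp only [W, artanh_zero] at h
  norm_num at h
  linarith

/-- `4 log 2 · (1 - x)² · (φ ∘ √)''(x)` at `x = s²`. -/
noncomputable def scaledCurvature (s : ℝ) : ℝ :=
  (1 - s ^ 2) * ((1 - s ^ 2) * artanh s - s) / s ^ 3

lemma scaledCurvature_nonpos {s : ℝ} (hs : s ∈ Ioo 0 1) : scaledCurvature s ≤ 0 := by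
  have h₁ : 0 < 1 - s ^ 2 := by nlinarith [hs.1, hs.2]
  have h := artanh_le_div (Ioo_subset_Ico_self hs)
  rw [le_div_iff₀ (by positivity)] at h
  have : (1 - s ^ 2) * artanh s ≤ s := by nlinarith [hs.1]
  exact div_nonpos_of_nonpos_of_nonneg (mul_nonpos_of_nonneg_of_nonpos h₁.le (by linarith))
    (pow_nonneg hs.1.le 3)

lemma monotoneOn_scaledCurvature : MonotoneOn scaledCurvature (Ioo 0 1) := by
  have hM : ∀ s ∈ Ioo (0 : ℝ) 1, HasDerivAt scaledCurvature
      ((s * (3 - s ^ 2) - (3 + s ^ 2) * (1 - s ^ 2) * artanh s) / s ^ 4) s := by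
    intro s hs
    have h₁ : 1 - s ^ 2 ≠ 0 := by nlinarith [hs.1, hs.2]
    have hs0 : s ≠ 0 := hs.1.ne'
    have ha := hasDerivAt_artanh ⟨by linarith [hs.1], hs.2⟩
    have hq := (hasDerivAt_pow 2 s).const_sub 1
    refine (((hq.mul ((hq.mul ha).sub (hasDerivAt_id s))).div (hasDerivAt_pow 3 s)
      (pow_ne_zero 3 hs0))).congr_deriv ?_
    simp only [Pi.mul_apply, Pi.sub_apply, id]
    field_simp
    ring
  refine monotoneOn_Ioo_of_hasDerivAt_nonneg hM fun s hs => ?_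
  have h₁ : 0 < 1 - s ^ 2 := by nlinarith [hs.1, hs.2]
  have h := artanh_le_div (Ioo_subset_Ico_self hs)
  rw [le_div_iff₀ (by positivity)] at h
  exact div_nonneg (by linarith) (by positivity)

lemma phi_eq_mul_log (s : ℝ) :
    phi s = 1 - ((1 + s) * log (1 + s) + (1 - s) * log (1 - s)) / (2 * log 2) := by
  simp only [phi, logb]
  ring

lemma continuous_phi : Continuous phi := by
  simp only [funext phi_eq_mul_log]
  have h₁ : Continuous fun s : ℝ => (1 + s) * log (1 + s) :=
    continuous_mul_log.comp (by fun_prop)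
  have h₂ : Continuous fun s : ℝ => (1 - s) * log (1 - s) :=
    continuous_mul_log.comp (by fun_prop)
  fun_prop

lemma hasDerivAt_phi {s : ℝ} (hs : s ∈ Ioo (-1) 1) :
    HasDerivAt phi (-artanh s / log 2) s := by
  have h₁ : 0 < 1 + s := by linarith [hs.1]
  have h₂ : 0 < 1 - s := by linarith [hs.2]
  have hA := (hasDerivAt_mul_log h₁.ne').comp s ((hasDerivAt_id s).const_add 1)
  have hB := (hasDerivAt_mul_log h₂.ne').comp s ((hasDerivAt_id s).const_sub 1)
  rw [funext phi_eq_mul_log]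
  refine (((hA.add hB).div_const (2 * log 2)).const_sub 1).congr_deriv ?_
  rw [artanh_eq_half_log_sub_log hs]
  field_simp
  ring

lemma sqrt_mem_Ioo_zero_one {x : ℝ} (hx : x ∈ Ioo 0 1) : √x ∈ Ioo 0 1 :=
  ⟨sqrt_pos.2 hx.1, (sqrt_lt' one_pos).2 (by linarith [hx.2])⟩

lemma hasDerivAt_phi_sqrt {x : ℝ} (hx : x ∈ Ioo 0 1) :
    HasDerivAt (fun x => phi √x) (-artanh √x / (2 * log 2 * √x)) x := by
  have hs := sqrt_mem_Ioo_zero_one hx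
  refine ((hasDerivAt_phi ⟨by linarith [hs.1], hs.2⟩).comp x
    (hasDerivAt_sqrt hx.1.ne')).congr_deriv ?_
  have := hs.1.ne'
  field_simp

lemma hasDerivAt_deriv_phi_sqrt {x : ℝ} (hx : x ∈ Ioo 0 1) :
    HasDerivAt (fun x => -artanh √x / (2 * log 2 * √x))
      (scaledCurvature √x / (4 * log 2) / (1 - x) ^ 2) x := by
  have hs := sqrt_mem_Ioo_zero_one hx
  have hsqrt := hasDerivAt_sqrt hx.1.ne'
  have hnum := ((hasDerivAt_artanh ⟨by linarith [hs.1], hs.2⟩).comp x hsqrt).neg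
  refine (hnum.div (hsqrt.const_mul (2 * log 2))
    (by have := hs.1; positivity)).congr_deriv ?_
  simp only [Function.comp_apply, Pi.neg_apply, scaledCurvature]
  set s := √x
  have hx2 : x = s ^ 2 := (sq_sqrt hx.1.le).symm
  rw [hx2]
  have h₁ : 1 - s ^ 2 ≠ 0 := by nlinarith [hs.1, hs.2]
  have := hs.1.ne'
  field_simp
  ring

lemma hasDerivAt_comp_affine {g g' : ℝ → ℝ} {Q x : ℝ} (hQ0 : 0 ≤ Q) (hQ1 : Q ≤ 1)
    (hx : x ∈ Ioo 0 1) (hg : ∀ y ∈ Ioo 0 1, HasDerivAt g (g' y) y) :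
    HasDerivAt (fun t => g (Q + (1 - Q) * t)) ((1 - Q) * g' (Q + (1 - Q) * x)) x := by
  rcases hQ1.lt_or_eq with hQ1 | rfl
  · have hl : Q + (1 - Q) * x ∈ Ioo 0 1 := ⟨by nlinarith [hx.1], by nlinarith [hx.2]⟩
    have hA : HasDerivAt (fun t => Q + (1 - Q) * t) (1 - Q) x := by
      simpa using ((hasDerivAt_id x).const_mul (1 - Q)).const_add Q
    exact ((hg _ hl).comp x hA).congr_deriv (mul_comm _ _)
  -- For `Q = 1` the composite is constant, and the junk value `g' 1` is multiplied by `0`.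
  · simpa using hasDerivAt_const x (g 1)

lemma convexOn_comp_affine_sub {g g' h : ℝ → ℝ} {Q : ℝ} (hQ0 : 0 ≤ Q) (hQ1 : Q ≤ 1)
    (hg : ContinuousOn g (Icc 0 1)) (hg' : ∀ x ∈ Ioo 0 1, HasDerivAt g (g' x) x)
    (hg'' : ∀ x ∈ Ioo 0 1, HasDerivAt g' (h x / (1 - x) ^ 2) x)
    (hh_mono : MonotoneOn h (Ioo 0 1)) (hh_nonpos : ∀ x ∈ Ioo 0 1, h x ≤ 0) :
    ConvexOn ℝ (Icc 0 1) (fun x => g (Q + (1 - Q) * x) - g x) := by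
  have hmaps : MapsTo (fun x => Q + (1 - Q) * x) (Icc 0 1) (Icc 0 1) := fun x hx =>
    ⟨by nlinarith [hx.1], by nlinarith [hx.2]⟩
  refine convexOn_of_hasDerivWithinAt2_nonneg (convex_Icc 0 1)
    ((hg.comp (by fun_prop) hmaps).sub hg)
    (f' := fun x => (1 - Q) * g' (Q + (1 - Q) * x) - g' x)
    (f'' := fun x => (1 - Q) ^ 2 * (h (Q + (1 - Q) * x) / (1 - (Q + (1 - Q) * x)) ^ 2)
      - h x / (1 - x) ^ 2) ?_ ?_ ?_ <;> rw [interior_Icc] <;> intro x hx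
  · exact ((hasDerivAt_comp_affine hQ0 hQ1 hx hg').sub (hg' x hx)).hasDerivWithinAt
  · refine ((((hasDerivAt_comp_affine hQ0 hQ1 hx hg'').const_mul (1 - Q)).sub
      (hg'' x hx)).congr_deriv ?_).hasDerivWithinAt
    ring
  · rcases hQ1.lt_or_eq with hQ1 | rfl
    · have hl : Q + (1 - Q) * x ∈ Ioo 0 1 := ⟨by nlinarith [hx.1], by nlinarith [hx.2]⟩
      have hh : h x ≤ h (Q + (1 - Q) * x) := hh_mono hx hl (by nlinarith [hx.2])
      have : 1 - (Q + (1 - Q) * x) = (1 - Q) * (1 - x) := by ring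
      have hQ : 0 < 1 - Q := by linarith
      calc (0 : ℝ) ≤ (h (Q + (1 - Q) * x) - h x) / (1 - x) ^ 2 :=
            div_nonneg (sub_nonneg.2 hh) (sq_nonneg _)
        _ = _ := by rw [this]; field_simp
    · simpa using div_nonpos_of_nonpos_of_nonneg (hh_nonpos x hx) (sq_nonneg (1 - x))

theorem stmt_2 (Q : ℝ) (hQ0 : 0 ≤ Q) (hQ1 : Q ≤ 1) :
    ConvexOn ℝ (Set.Icc 0 1)
      (fun x : ℝ => 1 + phi (Real.sqrt (Q + (1 - Q) * x)) - phi (Real.sqrt x)) := by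
  have hlog : 0 < 4 * log 2 := by positivity
  have hmono : MonotoneOn (fun x => scaledCurvature √x / (4 * log 2)) (Ioo 0 1) :=
    fun x hx y hy hxy => div_le_div_of_nonneg_right (monotoneOn_scaledCurvature
      (sqrt_mem_Ioo_zero_one hx) (sqrt_mem_Ioo_zero_one hy) (sqrt_le_sqrt hxy)) hlog.le
  have hnonpos : ∀ x ∈ Ioo (0 : ℝ) 1, scaledCurvature √x / (4 * log 2) ≤ 0 := fun x hx =>
    div_nonpos_of_nonpos_of_nonneg (scaledCurvature_nonpos (sqrt_mem_Ioo_zero_one hx)) hlog.le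
  have h := convexOn_comp_affine_sub (g := fun x => phi √x) hQ0 hQ1
    (continuous_phi.comp continuous_sqrt).continuousOn (fun x hx => hasDerivAt_phi_sqrt hx)
    (fun x hx => hasDerivAt_deriv_phi_sqrt hx) hmono hnonpos
  exact (h.add_const 1).congr fun x _ => by simp only [Pi.add_apply]; ring
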